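/- arXiv:2307.01617 — 6 statements merged into one kernel-verified Lean document; each statement's English description precedes it below -/
import Mathlib

section
/- For every wealth vector w ∈ ℝ^n, the total wealth after one step of the mean-field update map satisfies Σ_{i∈[n]} F(w)_i = μ · Σ_{i∈[n]} w_i. -/
lemma fermi_antisym (a : ℝ) :
    2 * (1 / (1 + Real.exp (-a))) - 1 = -(2 * (1 / (1 + Real.exp a)) - 1) := by
  have h1 : (1 : ℝ) + Real.exp (-a) > 0 := by positivity
  have h2 : (1 : ℝ) + Real.exp a > 0 := by positivity
  have h3 : Real.exp (-a) * Real.exp a = 1 := by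
    rw [← Real.exp_add]; simp
  field_simp
  nlinarith [h3]

/-- the total wealth after one step of the mean-field update map
satisfies `∑ i, F w i = μ * ∑ i, w i`. -/
theorem total_wealth_scales (n : ℕ) (G : SimpleGraph (Fin n)) [DecidableRel G.Adj]
    (hconn : G.Connected) (hE : 0 < G.edgeFinset.card)
    (η μ k : ℝ) (hη : η ≠ 0) (hμ : μ ≠ 0) (hk : 0 ≤ k)
    (Q : (Fin n → ℝ) → Fin n → Fin n → ℝ)
    (hQ : ∀ w i j, Q w i j = 1 / (1 + Real.exp (-η * (w i - w j))))
    (F : (Fin n → ℝ) → (Fin n → ℝ))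
    (hF : ∀ w i, F w i =
      (1 - (G.degree i : ℝ) / (G.edgeFinset.card : ℝ)) * μ * w i
        + μ / (G.edgeFinset.card : ℝ) *
          ∑ j ∈ G.neighborFinset i, (w i + k * (2 * Q w i j - 1)))
    (w : Fin n → ℝ) :
    ∑ i, F w i = μ * ∑ i, w i := by
  have hEne : (G.edgeFinset.card : ℝ) ≠ 0 := by positivity
  -- antisymmetry of the interaction term
  have hsym : ∀ i j, 2 * Q w i j - 1 = -(2 * Q w j i - 1) := by
    intro i j
    rw [hQ, hQ]
    have := fermi_antisym (η * (w i - w j))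
    have he : -η * (w j - w i) = η * (w i - w j) := by ring
    rw [he]
    have he2 : -η * (w i - w j) = -(η * (w i - w j)) := by ring
    rw [he2]
    exact this
  -- the interaction sum vanishes
  have key : ∑ i, ∑ j ∈ G.neighborFinset i, (2 * Q w i j - 1) = 0 := by
    set S := ∑ i, ∑ j ∈ G.neighborFinset i, (2 * Q w i j - 1) with hS
    have h1 : S = ∑ i, ∑ j, if G.Adj i j then (2 * Q w i j - 1) else 0 := by
      apply Finset.sum_congr rfl
      intro i _
      rw [SimpleGraph.neighborFinset_eq_filter, Finset.sum_filter]
    have h2 : S = -S := by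
      nth_rewrite 1 [h1]
      rw [Finset.sum_comm]
      rw [hS, ← Finset.sum_neg_distrib]
      apply Finset.sum_congr rfl
      intro j _
      rw [SimpleGraph.neighborFinset_eq_filter, Finset.sum_filter,
        ← Finset.sum_neg_distrib]
      apply Finset.sum_congr rfl
      intro x _
      by_cases h : G.Adj x j
      · rw [if_pos h, if_pos h.symm]; exact hsym x j
      · rw [if_neg h, if_neg (fun h' => h h'.symm), neg_zero]
    linarith
  have hterm : ∀ i, F w i = μ * w i + μ / (G.edgeFinset.card : ℝ) * k *
      ∑ j ∈ G.neighborFinset i, (2 * Q w i j - 1) := by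
    intro i
    rw [hF]
    rw [Finset.sum_add_distrib, Finset.sum_const, ← Finset.mul_sum]
    rw [SimpleGraph.card_neighborFinset_eq_degree]
    field_simp
    ring
  rw [Finset.sum_congr rfl (fun i _ => hterm i)]
  rw [Finset.sum_add_distrib, ← Finset.mul_sum, ← Finset.mul_sum, key]
  ring
end

section
/- If the sequence of wealth vectors satisfies w(t+1) = F(w(t)) for all t ≥ 0, then the average wealth W_t = (1/n) Σ_{i∈[n]} w_i(t) satisfies W_t = μ^t · W_0 for all t ≥ 0. -/
/-- if `w (t+1) = F (w t)` for all `t`, then the average wealth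
`W t = (1/n) ∑ i, w t i` satisfies `W t = μ ^ t * W 0` for all `t`. -/
theorem average_wealth_geometric (n : ℕ) (G : SimpleGraph (Fin n)) [DecidableRel G.Adj]
    (hconn : G.Connected) (hE : 0 < G.edgeFinset.card)
    (η μ k : ℝ) (hη : η ≠ 0) (hμ : μ ≠ 0) (hk : 0 ≤ k)
    (Q : (Fin n → ℝ) → Fin n → Fin n → ℝ)
    (hQ : ∀ w i j, Q w i j = 1 / (1 + Real.exp (-η * (w i - w j))))
    (F : (Fin n → ℝ) → (Fin n → ℝ))
    (hF : ∀ w i, F w i =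
      (1 - (G.degree i : ℝ) / (G.edgeFinset.card : ℝ)) * μ * w i
        + μ / (G.edgeFinset.card : ℝ) *
          ∑ j ∈ G.neighborFinset i, (w i + k * (2 * Q w i j - 1)))
    (w : ℕ → Fin n → ℝ) (hw : ∀ t, w (t + 1) = F (w t)) :
    ∀ t, (1 / (n : ℝ)) * ∑ i, w t i = μ ^ t * ((1 / (n : ℝ)) * ∑ i, w 0 i) := by
  have hEne : (G.edgeFinset.card : ℝ) ≠ 0 := Nat.cast_ne_zero.mpr hE.ne'
  -- antisymmetry of 2Q-1
  have hQsym : ∀ v : Fin n → ℝ, ∀ i j, 2 * Q v i j - 1 = -(2 * Q v j i - 1) := by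
    intro v i j
    rw [hQ, hQ]
    set a := Real.exp (-η * (v i - v j)) with ha
    have hpa : 0 < a := Real.exp_pos _
    have he : Real.exp (-η * (v j - v i)) = a⁻¹ := by
      rw [ha, ← Real.exp_neg]; ring_nf
    rw [he]
    have h1 : (1 : ℝ) + a ≠ 0 := by positivity
    have h2 : (1 : ℝ) + a⁻¹ ≠ 0 := by positivity
    field_simp
    ring
  -- cancellation of the antisymmetric double sum
  have hcancel : ∀ v : Fin n → ℝ,
      ∑ i, ∑ j ∈ G.neighborFinset i, (2 * Q v i j - 1) = 0 := by
    intro v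
    have hrw : ∀ i : Fin n, ∑ j ∈ G.neighborFinset i, (2 * Q v i j - 1)
        = ∑ j, if G.Adj i j then (2 * Q v i j - 1) else 0 := by
      intro i
      rw [SimpleGraph.neighborFinset_eq_filter, Finset.sum_filter]
    set S := ∑ i, ∑ j ∈ G.neighborFinset i, (2 * Q v i j - 1) with hS
    have h1 : S = ∑ i, ∑ j, if G.Adj i j then (2 * Q v i j - 1) else 0 := by
      rw [hS]; exact Finset.sum_congr rfl fun i _ => hrw i
    have h2 : S + S = 0 := by
      have hswap : S = ∑ i, ∑ j, if G.Adj j i then (2 * Q v j i - 1) else 0 := by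
        rw [h1, Finset.sum_comm]
      calc S + S
          = ∑ i, ∑ j, ((if G.Adj i j then (2 * Q v i j - 1) else 0)
              + (if G.Adj j i then (2 * Q v j i - 1) else 0)) := by
            nth_rewrite 1 [h1]
            nth_rewrite 1 [hswap]
            rw [← Finset.sum_add_distrib]
            exact Finset.sum_congr rfl fun i _ => (Finset.sum_add_distrib).symm
        _ = 0 := by
            refine Finset.sum_eq_zero fun i _ => Finset.sum_eq_zero fun j _ => ?_
            by_cases h : G.Adj i j
            · rw [if_pos h, if_pos h.symm, hQsym v i j]; ring
            · rw [if_neg h, if_neg (fun h' => h h'.symm), add_zero]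
    linarith
  -- the key: sum of F v = μ * sum v
  have key : ∀ v : Fin n → ℝ, ∑ i, F v i = μ * ∑ i, v i := by
    intro v
    have hFi : ∀ i, F v i = μ * v i
        + (μ * k / (G.edgeFinset.card : ℝ)) * ∑ j ∈ G.neighborFinset i, (2 * Q v i j - 1) := by
      intro i
      rw [hF]
      rw [Finset.sum_add_distrib, Finset.sum_const, ← Finset.mul_sum,
        SimpleGraph.card_neighborFinset_eq_degree, nsmul_eq_mul]
      field_simp
      ring
    calc ∑ i, F v i = ∑ i, (μ * v i
        + (μ * k / (G.edgeFinset.card : ℝ)) * ∑ j ∈ G.neighborFinset i, (2 * Q v i j - 1)) :=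
          Finset.sum_congr rfl fun i _ => hFi i
      _ = μ * ∑ i, v i + (μ * k / (G.edgeFinset.card : ℝ)) *
            ∑ i, ∑ j ∈ G.neighborFinset i, (2 * Q v i j - 1) := by
          rw [Finset.sum_add_distrib, ← Finset.mul_sum, ← Finset.mul_sum]
      _ = μ * ∑ i, v i := by rw [hcancel]; ring
  intro t
  induction t with
  | zero => simp
  | succ t ih =>
    rw [hw t, key, pow_succ]
    rw [mul_comm (μ ^ t) μ, mul_assoc, ← ih]
    ring
end

section
/- Suppose w(t+1) = F(w(t)) for all t ≥ 0, the sequence μ^t converges to a limit m ∈ ℝ as t → ∞, and the sequence w(t) converges to a constant vector c·𝟙 for some c ∈ ℝ (an equal wealth society is achieved). Then c = (m/n) · Σ_{i∈[n]} w_i(0). In particular, if |μ| < 1 then c = 0. -/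
open Filter Topology

/-- if `w (t+1) = F (w t)`, `μ ^ t → m`, and `w t` converges to the
constant vector `c • 𝟙` (an equal wealth society is achieved), then
`c = (m / n) * ∑ i, w 0 i`; in particular, if `|μ| < 1` then `c = 0`. -/
theorem equal_wealth_limit (n : ℕ) (G : SimpleGraph (Fin n)) [DecidableRel G.Adj]
    (hconn : G.Connected) (hE : 0 < G.edgeFinset.card)
    (η μ k : ℝ) (hη : η ≠ 0) (hμ : μ ≠ 0) (hk : 0 ≤ k)
    (Q : (Fin n → ℝ) → Fin n → Fin n → ℝ)
    (hQ : ∀ w i j, Q w i j = 1 / (1 + Real.exp (-η * (w i - w j))))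
    (F : (Fin n → ℝ) → (Fin n → ℝ))
    (hF : ∀ w i, F w i =
      (1 - (G.degree i : ℝ) / (G.edgeFinset.card : ℝ)) * μ * w i
        + μ / (G.edgeFinset.card : ℝ) *
          ∑ j ∈ G.neighborFinset i, (w i + k * (2 * Q w i j - 1)))
    (w : ℕ → Fin n → ℝ) (hw : ∀ t, w (t + 1) = F (w t))
    (m : ℝ) (hm : Tendsto (fun t : ℕ => μ ^ t) atTop (𝓝 m))
    (c : ℝ) (hc : Tendsto w atTop (𝓝 (fun _ : Fin n => c))) :
    c = (m / (n : ℝ)) * ∑ i, w 0 i ∧ (|μ| < 1 → c = 0) := by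
  obtain ⟨i0⟩ := hconn.nonempty
  have hn : (0:ℕ) < n := Fin.pos i0
  have hEne : (G.edgeFinset.card : ℝ) ≠ 0 := Nat.cast_ne_zero.mpr hE.ne'
  -- antisymmetry of 2Q-1
  have hanti : ∀ v i j, (2 * Q v i j - 1) = -(2 * Q v j i - 1) := by
    intro v i j
    rw [hQ, hQ]
    set a := Real.exp (-η * (v i - v j)) with ha
    set b := Real.exp (-η * (v j - v i)) with hb
    have hapos : 0 < a := by rw [ha]; exact Real.exp_pos _
    have hbpos : 0 < b := by rw [hb]; exact Real.exp_pos _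
    have hab : a * b = 1 := by
      rw [ha, hb, ← Real.exp_add]; ring_nf; exact Real.exp_zero
    have h1 : (1 : ℝ) + a ≠ 0 := by positivity
    have h2 : (1 : ℝ) + b ≠ 0 := by positivity
    field_simp
    nlinarith [hab, hapos, hbpos]
  -- double-sum over neighbors of antisymmetric function is 0
  have hzero : ∀ v, ∑ i, ∑ j ∈ G.neighborFinset i, (2 * Q v i j - 1) = 0 := by
    intro v
    have hrw : ∀ i : Fin n, ∑ j ∈ G.neighborFinset i, (2 * Q v i j - 1)
        = ∑ j, if G.Adj i j then (2 * Q v i j - 1) else 0 := by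
      intro i
      rw [SimpleGraph.neighborFinset_eq_filter, Finset.sum_filter]
    have : ∑ i, ∑ j, (if G.Adj i j then (2 * Q v i j - 1) else 0)
        = -∑ i, ∑ j, (if G.Adj i j then (2 * Q v i j - 1) else 0) := by
      conv_lhs => rw [Finset.sum_comm]
      rw [← Finset.sum_neg_distrib]
      apply Finset.sum_congr rfl
      intro i _
      rw [← Finset.sum_neg_distrib]
      apply Finset.sum_congr rfl
      intro j _
      by_cases h : G.Adj j i
      · simp [h, h.symm, hanti v j i]
      · have h' : ¬ G.Adj i j := fun hh => h hh.symm
        simp [h, h']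
    have hz : ∑ i, ∑ j, (if G.Adj i j then (2 * Q v i j - 1) else 0) = 0 := by linarith
    simp only [hrw]
    exact hz
  -- sum of F v = μ * sum v
  have hsumF : ∀ v, ∑ i, F v i = μ * ∑ i, v i := by
    intro v
    have expand : ∀ i, F v i = μ * v i + μ / (G.edgeFinset.card : ℝ) * k *
        ∑ j ∈ G.neighborFinset i, (2 * Q v i j - 1) := by
      intro i
      rw [hF]
      rw [Finset.sum_add_distrib, Finset.sum_const, ← Finset.mul_sum]
      have hd : (G.neighborFinset i).card = G.degree i := rfl
      rw [hd]
      field_simp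
      ring
    simp only [expand]
    rw [Finset.sum_add_distrib, ← Finset.mul_sum, ← Finset.mul_sum, hzero]
    ring
  -- total wealth
  have htot : ∀ t, ∑ i, w t i = μ ^ t * ∑ i, w 0 i := by
    intro t
    induction t with
    | zero => simp
    | succ t ih => rw [hw t, hsumF, ih, pow_succ]; ring
  -- limits
  have hlim1 : Tendsto (fun t => ∑ i, w t i) atTop (𝓝 ((n : ℝ) * c)) := by
    have : Tendsto (fun t => ∑ i, w t i) atTop (𝓝 (∑ _i : Fin n, c)) := by
      apply tendsto_finset_sum
      intro i _
      exact (continuous_apply i).continuousAt.tendsto.comp hc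
    have h2 : (∑ _i : Fin n, c) = (n : ℝ) * c := by
      simp [Finset.sum_const, nsmul_eq_mul]
    rw [← h2]; exact this
  have hlim2 : Tendsto (fun t => ∑ i, w t i) atTop (𝓝 (m * ∑ i, w 0 i)) := by
    have hfe : (fun t => ∑ i, w t i) = fun t => μ ^ t * ∑ i, w 0 i := funext htot
    rw [hfe]
    exact hm.mul_const _
  have heq : (n : ℝ) * c = m * ∑ i, w 0 i := tendsto_nhds_unique hlim1 hlim2
  have hne : (n : ℝ) ≠ 0 := Nat.cast_ne_zero.mpr hn.ne'
  constructor
  · rw [div_mul_eq_mul_div, eq_div_iff hne]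
    linarith [heq]
  · intro hμ1
    have hm0 : m = 0 := tendsto_nhds_unique hm (tendsto_pow_atTop_nhds_zero_of_abs_lt_one hμ1)
    have : (n : ℝ) * c = 0 := by rw [heq, hm0]; ring
    exact (mul_eq_zero.mp this).resolve_left hne
end

section
/- For every c ∈ ℝ, the mean-field update map F is differentiable at the constant vector c·𝟙, and its Fréchet derivative there is the linear map w ↦ μ·(w + a·L w), where a = kη/(2|E|) and L is the Laplacian matrix of G. Equivalently, the Jacobian matrix J of F at any equal wealth state is J = μ(a·L + I), i.e., J_{ii} = μ(1 + kη d_i/(2|E|)), J_{ij} = −μkη/(2|E|) for j ∈ N_i, and J_{ij} = 0 for j ∉ N_i ∪ {i}. -/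
noncomputable abbrev JacobianProof.prj (n : ℕ) (i : Fin n) : (Fin n → ℝ) →L[ℝ] ℝ :=
  ContinuousLinearMap.proj i

open JacobianProof in
set_option maxHeartbeats 1000000 in
/-- the mean-field update map `F` is differentiable at any constant
vector `c • 𝟙`, with Fréchet derivative `w ↦ μ • (w + a • L w)` where
`a = kη/(2|E|)` and `L` is the Laplacian of `G`; equivalently the Jacobian there
is `J = μ (a L + I)`, with the stated entries. -/
theorem jacobian_at_equal_wealth (n : ℕ) (G : SimpleGraph (Fin n)) [DecidableRel G.Adj]
    (hconn : G.Connected) (hE : 0 < G.edgeFinset.card)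
    (η μ k : ℝ) (hη : η ≠ 0) (hμ : μ ≠ 0) (hk : 0 ≤ k)
    (Q : (Fin n → ℝ) → Fin n → Fin n → ℝ)
    (hQ : ∀ w i j, Q w i j = 1 / (1 + Real.exp (-η * (w i - w j))))
    (F : (Fin n → ℝ) → (Fin n → ℝ))
    (hF : ∀ w i, F w i =
      (1 - (G.degree i : ℝ) / (G.edgeFinset.card : ℝ)) * μ * w i
        + μ / (G.edgeFinset.card : ℝ) *
          ∑ j ∈ G.neighborFinset i, (w i + k * (2 * Q w i j - 1)))
    (a : ℝ) (ha : a = k * η / (2 * (G.edgeFinset.card : ℝ)))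
    (J : Matrix (Fin n) (Fin n) ℝ)
    (hJ : J = μ • (a • G.lapMatrix ℝ + (1 : Matrix (Fin n) (Fin n) ℝ)))
    (c : ℝ) :
    HasFDerivAt F (LinearMap.toContinuousLinearMap J.mulVecLin) (fun _ => c) ∧
      (∀ i, J i i = μ * (1 + k * η * (G.degree i : ℝ) / (2 * (G.edgeFinset.card : ℝ)))) ∧
      (∀ i j, G.Adj i j → J i j = -(μ * k * η) / (2 * (G.edgeFinset.card : ℝ))) ∧
      (∀ i j, i ≠ j → ¬G.Adj i j → J i j = 0) := by
  have hEne : (G.edgeFinset.card : ℝ) ≠ 0 := Nat.cast_ne_zero.mpr hE.ne'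
  refine ⟨?_, ?_, ?_, ?_⟩
  · -- the derivative statement
    have hFeq : F = fun w i =>
        (1 - (G.degree i : ℝ) / (G.edgeFinset.card : ℝ)) * μ * w i
          + μ / (G.edgeFinset.card : ℝ) *
            ∑ j ∈ G.neighborFinset i,
              (w i + k * (2 * (1 + Real.exp (-η * (w i - w j)))⁻¹ - 1)) := by
      funext w i
      rw [hF]
      congr 1
      congr 1
      apply Finset.sum_congr rfl
      intro j _
      rw [hQ, one_div]
    rw [hFeq]
    set x : Fin n → ℝ := fun _ => c with hx
    apply hasFDerivAt_pi''
    intro i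
    have h1 : ∀ j : Fin n, HasFDerivAt (fun w : Fin n → ℝ => w i - w j)
        (prj n i - prj n j) x :=
      fun j => (hasFDerivAt_apply i x).sub (hasFDerivAt_apply j x)
    have h5 : ∀ j : Fin n, HasFDerivAt
        (fun w : Fin n → ℝ => (1 + Real.exp (-η * (w i - w j)))⁻¹)
        (((1 : ℝ →L[ℝ] ℝ).smulRight
            (-((1 + Real.exp (-η * (x i - x j))) ^ 2)⁻¹)).comp
          ((Real.exp (-η * (x i - x j))) •
            ((-η) • (prj n i - prj n j)))) x := by
      intro j
      have h2 := (h1 j).const_mul (-η)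
      have h3 := h2.exp
      have h4 := h3.const_add 1
      have hne : (1 : ℝ) + Real.exp (-η * (x i - x j)) ≠ 0 := by positivity
      exact (hasFDerivAt_inv hne).comp x h4
    have h7 : ∀ j ∈ G.neighborFinset i, HasFDerivAt
        (fun w : Fin n → ℝ => w i + k * (2 * (1 + Real.exp (-η * (w i - w j)))⁻¹ - 1))
        ((prj n i) +
          k • ((2:ℝ) • (((1 : ℝ →L[ℝ] ℝ).smulRight
            (-((1 + Real.exp (-η * (x i - x j))) ^ 2)⁻¹)).comp
          ((Real.exp (-η * (x i - x j))) •
            ((-η) • (prj n i - prj n j)))))) x := by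
      intro j _
      exact (hasFDerivAt_apply i x).add ((((h5 j).const_mul 2).sub_const 1).const_mul k)
    have hsum := HasFDerivAt.fun_sum h7
    have hfinal := ((hasFDerivAt_apply i x).const_mul
        ((1 - (G.degree i : ℝ) / (G.edgeFinset.card : ℝ)) * μ)).fun_add
      (hsum.const_mul (μ / (G.edgeFinset.card : ℝ)))
    refine hfinal.congr_fderiv ?_
    ext v
    simp only [ContinuousLinearMap.add_apply, ContinuousLinearMap.smul_apply,
      ContinuousLinearMap.coe_comp', Function.comp_apply, ContinuousLinearMap.coe_sum',
      Finset.sum_apply, prj, ContinuousLinearMap.proj_apply, ContinuousLinearMap.sub_apply,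
      ContinuousLinearMap.smulRight_apply, ContinuousLinearMap.one_apply,
      ContinuousLinearMap.coe_smul', Pi.smul_apply, smul_eq_mul,
      LinearMap.coe_toContinuousLinearMap', Matrix.mulVecLin_apply, hJ,
      Matrix.smul_mulVec, Matrix.add_mulVec, Matrix.one_mulVec, Pi.add_apply,
      SimpleGraph.lapMatrix_mulVec_apply]
    simp only [hx, sub_self, mul_zero, neg_zero, Real.exp_zero, nsmul_eq_mul, smul_eq_mul]
    rw [show (∑ j ∈ G.neighborFinset i,
        (v i + k * (2 * (1 * (-η * (v i - v j)) * -(((1:ℝ) + 1) ^ 2)⁻¹)))) =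
        ∑ j ∈ G.neighborFinset i, (v i + k * η / 2 * (v i - v j)) from
      Finset.sum_congr rfl fun j _ => by ring]
    rw [Finset.sum_add_distrib, Finset.sum_const, ← Finset.mul_sum,
      Finset.sum_sub_distrib, Finset.sum_const, SimpleGraph.card_neighborFinset_eq_degree]
    simp only [nsmul_eq_mul, smul_eq_mul, ha]
    field_simp
    ring
  · intro i
    simp only [hJ, Matrix.smul_apply, Matrix.add_apply, SimpleGraph.lapMatrix,
      Matrix.sub_apply, SimpleGraph.degMatrix, Matrix.diagonal_apply_eq,
      SimpleGraph.adjMatrix_apply, Matrix.one_apply_eq, smul_eq_mul,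
      if_neg (G.loopless.irrefl i), ha]
    field_simp
    ring_nf
    try exact Or.inl trivial
  · intro i j hadj
    have hne := G.ne_of_adj hadj
    simp only [hJ, Matrix.smul_apply, Matrix.add_apply, SimpleGraph.lapMatrix,
      Matrix.sub_apply, SimpleGraph.degMatrix, Matrix.diagonal_apply_ne _ hne,
      SimpleGraph.adjMatrix_apply, Matrix.one_apply_ne hne, smul_eq_mul,
      if_pos hadj, ha]
    field_simp
    ring
  · intro i j hne hadj
    simp only [hJ, Matrix.smul_apply, Matrix.add_apply, SimpleGraph.lapMatrix,
      Matrix.sub_apply, SimpleGraph.degMatrix, Matrix.diagonal_apply_ne _ hne,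
      SimpleGraph.adjMatrix_apply, Matrix.one_apply_ne hne, smul_eq_mul,
      if_neg hadj]
    ring
end

section
/- For a finite simple undirected graph G = ([n], E) with at least one edge, the largest eigenvalue λ₁ of the Laplacian matrix L of G satisfies λ₁ ≤ max{ |N_i ∪ N_j| : (i,j) ∈ E }. -/
set_option maxHeartbeats 2000000 in
/-- for a graph with at least one edge, the largest eigenvalue of
the Laplacian is at most `max { |N_i ∪ N_j| : (i,j) ∈ E }`. -/
theorem laplacian_eigenvalue_le_union_neighborhoods (n : ℕ)
    (G : SimpleGraph (Fin n)) [DecidableRel G.Adj]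
    (hE : 0 < G.edgeFinset.card)
    (lam1 : ℝ)
    (hlam1 : IsGreatest {b : ℝ | ∃ v : Fin n → ℝ, v ≠ 0 ∧
      (G.lapMatrix ℝ).mulVec v = b • v} lam1) :
    lam1 ≤ ((((Finset.univ : Finset (Fin n × Fin n)).filter (fun p => G.Adj p.1 p.2)).sup
      (fun p => (G.neighborFinset p.1 ∪ G.neighborFinset p.2).card) : ℕ) : ℝ) := by
    classical
  rcases le_or_gt lam1 0 with hl | hl
  · exact hl.trans (Nat.cast_nonneg _)
  obtain ⟨x, hx0, hxe⟩ := hlam1.1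
  set F := (Finset.univ : Finset (Fin n × Fin n)).filter (fun p => G.Adj p.1 p.2) with hF
  -- F is nonempty
  have hFne : F.Nonempty := by
    rw [Finset.card_pos] at hE
    obtain ⟨e, he⟩ := hE
    induction e using Sym2.ind with
    | _ a b =>
      refine ⟨(a, b), ?_⟩
      simp only [hF, Finset.mem_filter, Finset.mem_univ, true_and]
      exact SimpleGraph.mem_edgeFinset.mp he
  -- key pointwise eigen equation
  have key : ∀ u : Fin n, lam1 * x u = ∑ w ∈ G.neighborFinset u, (x u - x w) := by
    intro u
    have h := congrFun hxe u
    rw [SimpleGraph.lapMatrix_mulVec_apply] at h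
    rw [Finset.sum_sub_distrib, Finset.sum_const, G.card_neighborFinset_eq_degree,
      nsmul_eq_mul]
    rw [Pi.smul_apply, smul_eq_mul] at h
    linarith [h]
  obtain ⟨p, hpF, hpmax⟩ := F.exists_max_image (fun p => |x p.1 - x p.2|) hFne
  set u := p.1
  set v := p.2
  have huv : G.Adj u v := by
    simp only [hF, Finset.mem_filter] at hpF
    exact hpF.2
  set z := x u - x v with hz
  have hmax : ∀ a b : Fin n, G.Adj a b → |x a - x b| ≤ |z| := by
    intro a b hab
    have : (a, b) ∈ F := by simp [hF, hab]
    exact hpmax (a, b) this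
  -- z ≠ 0
  have hzne : |z| ≠ 0 := by
    intro h0
    apply hx0
    funext w
    have hw := key w
    have : ∑ t ∈ G.neighborFinset w, (x w - x t) = 0 := by
      apply Finset.sum_eq_zero
      intro t ht
      have hadj : G.Adj w t := (G.mem_neighborFinset w t).mp ht
      have := hmax w t hadj
      rw [h0] at this
      have := abs_nonneg (x w - x t)
      have heq : |x w - x t| = 0 := le_antisymm (by linarith) (by positivity)
      have := abs_eq_zero.mp heq
      linarith
    rw [this] at hw
    have := hl.ne'
    exact mul_eq_zero.mp hw |>.resolve_left this
  -- main bound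
  set U := G.neighborFinset u ∪ G.neighborFinset v with hU
  have hsum1 : ∑ w ∈ G.neighborFinset u, (x u - x w)
      = ∑ w ∈ U, (if w ∈ G.neighborFinset u then x u - x w else 0) := by
    rw [Finset.sum_ite_mem, Finset.inter_eq_right.mpr Finset.subset_union_left]
  have hsum2 : ∑ w ∈ G.neighborFinset v, (x v - x w)
      = ∑ w ∈ U, (if w ∈ G.neighborFinset v then x v - x w else 0) := by
    rw [Finset.sum_ite_mem, Finset.inter_eq_right.mpr Finset.subset_union_right]
  have hmain : lam1 * z = ∑ w ∈ U,
      ((if w ∈ G.neighborFinset u then x u - x w else 0)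
        - (if w ∈ G.neighborFinset v then x v - x w else 0)) := by
    rw [Finset.sum_sub_distrib, ← hsum1, ← hsum2, hz, mul_sub, key u, key v]
  have hterm : ∀ w ∈ U,
      |(if w ∈ G.neighborFinset u then x u - x w else 0)
        - (if w ∈ G.neighborFinset v then x v - x w else 0)| ≤ |z| := by
    intro w _
    by_cases h1 : w ∈ G.neighborFinset u <;> by_cases h2 : w ∈ G.neighborFinset v <;>
      simp only [h1, h2, if_true, if_false]
    · have : x u - x w - (x v - x w) = x u - x v := by ring
      rw [this]
    · rw [sub_zero]
      exact hmax u w ((G.mem_neighborFinset u w).mp h1)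
    · rw [zero_sub, abs_neg]
      exact hmax v w ((G.mem_neighborFinset v w).mp h2)
    · simp only [sub_zero, abs_zero]; exact abs_nonneg z
  have hbound : lam1 * |z| ≤ (U.card : ℝ) * |z| := by
    calc lam1 * |z| = |lam1 * z| := by
          rw [abs_mul, abs_of_pos hl]
      _ ≤ ∑ w ∈ U, |(if w ∈ G.neighborFinset u then x u - x w else 0)
            - (if w ∈ G.neighborFinset v then x v - x w else 0)| := by
          rw [hmain]; exact Finset.abs_sum_le_sum_abs _ _
      _ ≤ ∑ _w ∈ U, |z| := Finset.sum_le_sum hterm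
      _ = (U.card : ℝ) * |z| := by rw [Finset.sum_const, nsmul_eq_mul]
  have hzpos : 0 < |z| := lt_of_le_of_ne (abs_nonneg z) (Ne.symm hzne)
  have hlamcard : lam1 ≤ (U.card : ℝ) := le_of_mul_le_mul_right hbound hzpos
  refine hlamcard.trans ?_
  have hle : U.card ≤ F.sup (fun p => (G.neighborFinset p.1 ∪ G.neighborFinset p.2).card) :=
    Finset.le_sup (f := fun p => (G.neighborFinset p.1 ∪ G.neighborFinset p.2).card) hpF
  exact_mod_cast hle
end

section
/- Suppose 0 < |μ| < 1, k > 0, η ≠ 0 and |μ(1 + kη/2)| < 1. Then there exists N such that for every n ≥ N and every connected finite simple undirected graph G on n vertices, writing λ₁ for the largest eigenvalue of the Laplacian of G and |E| for its number of edges, one has |μ| · max(1, |1 + kηλ₁/(2|E|)|) < 1; consequently the Jacobian J = μ((kη/(2|E|))·L + I) of the mean-field dynamics at the equal wealth state has spectral radius strictly less than 1, so J^t v → 0 for every v ∈ ℝ^n. -/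
/-!
A connected graph on `n` vertices has at least `n - 1` edges, and its Laplacian eigenvalues lie in
`[0, n]` because `xᵀ L x ≤ n ‖x‖² - (∑ xᵢ)²`. Hence every rescaled eigenvalue `λ / (2|E|)` lies in
`[0, n / (2(n - 1))]`, an interval shrinking to `[0, 1/2]`. The function `x ↦ |μ (1 + kη x)|` is
convex, so on that interval it is at most `max |μ| |μ (1 + kη n / (2(n - 1)))|`, which tends to
`max |μ| |μ (1 + kη/2)| < 1`. The Jacobian acts on an eigenbasis of `L` by the scalars
`μ (1 + kη λ / (2|E|))`, all of modulus `< 1`, so its powers tend to `0` on every vector.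
-/

open Filter Topology Matrix Finset

theorem Finset.sum_sum_sub_sq {R ι : Type*} [CommRing R] [Fintype ι] (f : ι → R) :
    ∑ i, ∑ j, (f i - f j) ^ 2 = 2 * (Fintype.card ι * ∑ i, f i ^ 2 - (∑ i, f i) ^ 2) := by
  simp only [sub_sq, sum_add_distrib, sum_sub_distrib, sum_const, card_univ, nsmul_eq_mul,
    ← mul_sum, ← sum_mul]
  ring

theorem abs_mul_one_add_mul_le_max {μ a t T : ℝ} (ht0 : 0 ≤ t) (htT : t ≤ T) :
    |μ * (1 + a * t)| ≤ max |μ| |μ * (1 + a * T)| := by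
  rcases le_or_gt 0 (μ * a) with h | h
  · exact abs_le_max_abs_abs (by nlinarith) (by nlinarith)
  · rw [max_comm]
    exact abs_le_max_abs_abs (by nlinarith) (by nlinarith)

theorem tendsto_natCast_div_two_mul_sub_one :
    Tendsto (fun n : ℕ ↦ (n : ℝ) / (2 * (n - 1))) atTop (𝓝 (1 / 2)) := by
  refine ((tendsto_natCast_div_add_atTop (-1 : ℝ)).div_const 2).congr fun n ↦ ?_
  rw [div_div, mul_comm, sub_eq_add_neg]

theorem eventually_abs_mul_one_add_mul_lt_one {μ a : ℝ} (hμ : |μ| < 1)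
    (hcrit : |μ * (1 + a / 2)| < 1) :
    ∀ᶠ n : ℕ in atTop, ∀ x : ℝ, 0 ≤ x → x ≤ n / (2 * (n - 1)) → |μ * (1 + a * x)| < 1 := by
  have hcont : Continuous fun x : ℝ ↦ |μ * (1 + a * x)| := by fun_prop
  have hlim := (hcont.tendsto _).comp tendsto_natCast_div_two_mul_sub_one
  rw [mul_one_div] at hlim
  filter_upwards [hlim.eventually_lt_const hcrit] with n hn x hx0 hxX
  exact (abs_mul_one_add_mul_le_max hx0 hxX).trans_lt (max_lt hμ hn)

namespace Matrix

variable {R ι : Type*} [CommRing R] [Fintype ι] [DecidableEq ι]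

theorem pow_mulVec_of_mulVec_eq_smul {J : Matrix ι ι R} {c : R} {w : ι → R}
    (h : J *ᵥ w = c • w) (t : ℕ) : (J ^ t) *ᵥ w = c ^ t • w := by
  induction t with
  | zero => simp
  | succ t ih => rw [pow_succ, ← mulVec_mulVec, h, mulVec_smul, ih, smul_smul, pow_succ']

theorem smul_add_one_mulVec_of_mulVec_eq_smul {L : Matrix ι ι R} {l : R} {w : ι → R}
    (h : L *ᵥ w = l • w) (μ s : R) : (μ • (s • L + 1)) *ᵥ w = (μ * (1 + s * l)) • w := by
  rw [smul_mulVec, add_mulVec, smul_mulVec, h, one_mulVec]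
  module

theorem tendsto_pow_mulVec_of_basis {𝕜 κ : Type*} [NormedField 𝕜] [Fintype κ]
    {J : Matrix ι ι 𝕜} (b : Module.Basis κ 𝕜 (ι → 𝕜)) {c : κ → 𝕜}
    (hb : ∀ i, J *ᵥ b i = c i • b i) (hc : ∀ i, ‖c i‖ < 1) (v : ι → 𝕜) :
    Tendsto (fun t : ℕ ↦ (J ^ t) *ᵥ v) atTop (𝓝 0) := by
  rw [← b.sum_repr v]
  simp_rw [mulVec_sum, mulVec_smul, pow_mulVec_of_mulVec_eq_smul (hb _)]
  simpa using tendsto_finsetSum univ fun i _ ↦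
    ((tendsto_pow_atTop_nhds_zero_of_norm_lt_one (hc i)).smul_const (b i)).const_smul (b.repr v i)

end Matrix

namespace SimpleGraph

variable {V : Type*} [Fintype V]

theorem Connected.card_le_card_edgeFinset_add_one {G : SimpleGraph V} [DecidableRel G.Adj]
    (h : G.Connected) : Fintype.card V ≤ #G.edgeFinset + 1 := by
  simpa [Nat.card_eq_fintype_card, edgeFinset_card] using h.card_vert_le_card_edgeSet_add_one

variable [DecidableEq V] (G : SimpleGraph V) [DecidableRel G.Adj]

theorem lapMatrix_toLinearMap₂'_le (x : V → ℝ) :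
    toLinearMap₂' ℝ (G.lapMatrix ℝ) x x ≤ Fintype.card V * (x ⬝ᵥ x) := by
  calc toLinearMap₂' ℝ (G.lapMatrix ℝ) x x
      = (∑ i, ∑ j, if G.Adj i j then (x i - x j) ^ 2 else 0) / 2 := lapMatrix_toLinearMap₂' ℝ G x
    _ ≤ (∑ i, ∑ j, (x i - x j) ^ 2) / 2 := by
        gcongr with i _ j _
        split_ifs
        · exact le_rfl
        · positivity
    _ = Fintype.card V * (x ⬝ᵥ x) - (∑ i, x i) ^ 2 := by
        rw [sum_sum_sub_sq, dotProduct]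
        simp only [sq]
        ring
    _ ≤ Fintype.card V * (x ⬝ᵥ x) := sub_le_self _ (sq_nonneg _)

theorem le_card_of_lapMatrix_mulVec_eq_smul {b : ℝ} {v : V → ℝ} (hv : v ≠ 0)
    (h : G.lapMatrix ℝ *ᵥ v = b • v) : b ≤ Fintype.card V := by
  refine le_of_mul_le_mul_right ?_ (dotProduct_star_self_pos_iff.mpr hv)
  calc b * (star v ⬝ᵥ v) = toLinearMap₂' ℝ (G.lapMatrix ℝ) v v := by
        rw [toLinearMap₂'_apply', h, dotProduct_smul, smul_eq_mul, star_trivial]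
    _ ≤ _ := G.lapMatrix_toLinearMap₂'_le v

end SimpleGraph

theorem equal_wealth_stable_all_graphs_general (η μ k : ℝ)
    (hμ1 : |μ| < 1)
    (hcrit : |μ * (1 + k * η / 2)| < 1) :
    ∃ N : ℕ, ∀ n : ℕ, N ≤ n →
      ∀ (G : SimpleGraph (Fin n)) [DecidableRel G.Adj], G.Connected →
        ∀ lam1 : ℝ,
          IsGreatest {b : ℝ | ∃ v : Fin n → ℝ, v ≠ 0 ∧
            (G.lapMatrix ℝ).mulVec v = b • v} lam1 →
          |μ| * max 1 |1 + k * η * lam1 / (2 * (G.edgeFinset.card : ℝ))| < 1 ∧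
            ∀ v : Fin n → ℝ,
              Tendsto
                (fun t : ℕ =>
                  ((μ • ((k * η / (2 * (G.edgeFinset.card : ℝ))) • G.lapMatrix ℝ
                    + (1 : Matrix (Fin n) (Fin n) ℝ))) ^ t).mulVec v)
                atTop (𝓝 0) := by
  obtain ⟨N, hN⟩ := ((eventually_ge_atTop 2).and
    (eventually_abs_mul_one_add_mul_lt_one hμ1 hcrit)).exists_forall_of_atTop
  refine ⟨N, fun n hn G _ hconn lam1 hlam ↦ ?_⟩
  obtain ⟨hn2, hsmall⟩ := hN n hn
  set E : ℝ := (#G.edgeFinset : ℝ) with hE_def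
  have hE : (n : ℝ) - 1 ≤ E := by
    have := hconn.card_le_card_edgeFinset_add_one
    rw [Fintype.card_fin] at this
    rw [sub_le_iff_le_add, hE_def]
    exact_mod_cast this
  have hn1 : (1 : ℝ) ≤ n - 1 := by
    rw [le_sub_iff_add_le]
    exact_mod_cast hn2
  have hlam_le : lam1 ≤ n := by
    obtain ⟨w, hw, hLw⟩ := hlam.1
    simpa using G.le_card_of_lapMatrix_mulVec_eq_smul hw hLw
  have hstable : ∀ b, 0 ≤ b → b ≤ lam1 → |μ * (1 + k * η / (2 * E) * b)| < 1 := by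
    intro b hb0 hb
    rw [div_mul_eq_mul_div, mul_div_assoc]
    exact hsmall _ (by positivity)
      (div_le_div₀ (by positivity) (hb.trans hlam_le) (by linarith) (by linarith))
  constructor
  · have hlam0 : 0 ≤ lam1 := hlam.2 ⟨fun _ ↦ 1, fun h ↦ one_ne_zero (congrFun h ⟨0, by omega⟩),
      by simp [SimpleGraph.lapMatrix_mulVec_const_eq_zero]⟩
    rw [mul_max_of_nonneg _ _ (abs_nonneg μ), mul_one, ← abs_mul, mul_div_right_comm]
    exact max_lt hμ1 (hstable lam1 hlam0 le_rfl)
  · have hL := G.posSemidef_lapMatrix ℝ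
    let b := hL.1.eigenvectorBasis.toBasis.map (WithLp.linearEquiv 2 ℝ (Fin n → ℝ))
    have hb (i : Fin n) : b i = ⇑(hL.1.eigenvectorBasis i) := by simp [b]
    refine tendsto_pow_mulVec_of_basis b (fun i ↦ ?_) (fun i ↦ hstable _ (hL.eigenvalues_nonneg i)
      (hlam.2 ⟨_, hb i ▸ b.ne_zero i, hL.1.mulVec_eigenvectorBasis i⟩))
    rw [hb]
    exact smul_add_one_mulVec_of_mulVec_eq_smul (hL.1.mulVec_eigenvectorBasis i) μ _

/-- stable half of the phase transition: if `0 < |μ| < 1`,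
`k > 0`, `η ≠ 0` and `|μ (1 + kη/2)| < 1`, then for all large enough `n` and
every connected graph on `n` vertices we have
`|μ| * max 1 |1 + kηλ₁/(2|E|)| < 1`, and the iterates of the Jacobian
`J = μ ((kη/(2|E|)) L + I)` converge to `0` on every vector. -/
theorem equal_wealth_stable_all_graphs (η μ k : ℝ)
    (hμ0 : 0 < |μ|) (hμ1 : |μ| < 1) (hk : 0 < k) (hη : η ≠ 0)
    (hcrit : |μ * (1 + k * η / 2)| < 1) :
    ∃ N : ℕ, ∀ n : ℕ, N ≤ n →
      ∀ (G : SimpleGraph (Fin n)) [DecidableRel G.Adj], G.Connected →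
        ∀ lam1 : ℝ,
          IsGreatest {b : ℝ | ∃ v : Fin n → ℝ, v ≠ 0 ∧
            (G.lapMatrix ℝ).mulVec v = b • v} lam1 →
          |μ| * max 1 |1 + k * η * lam1 / (2 * (G.edgeFinset.card : ℝ))| < 1 ∧
            ∀ v : Fin n → ℝ,
              Tendsto
                (fun t : ℕ =>
                  ((μ • ((k * η / (2 * (G.edgeFinset.card : ℝ))) • G.lapMatrix ℝ
                    + (1 : Matrix (Fin n) (Fin n) ℝ))) ^ t).mulVec v)
                atTop (𝓝 0) :=
  equal_wealth_stable_all_graphs_general η μ k hμ1 hcrit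
end
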